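/- Let A, B, X be n×n complex matrices such that the 2n×2n block matrix M = [[A, X],[X*, B]] is accretive. Then for each j = 1,...,n, 2·s_j(X) ≤ s_j(M), where s_j denotes the j-th largest singular value. -/

import Mathlib

open MeasureTheory Matrix
open scoped ComplexOrder

/-- The "real part" (Hermitian part) of a complex matrix: `(A + Aᴴ)/2`. -/
noncomputable def mre {m : Type*} (A : Matrix m m ℂ) : Matrix m m ℂ :=
  (1/2 : ℂ) • (A + Aᴴ)

/-- A matrix is accretive if its Hermitian part is positive semidefinite. -/
def Accretive {m : Type*} [Fintype m] (A : Matrix m m ℂ) : Prop :=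
  (mre A).PosSemidef

/-- Principal fractional power `A ^ t` of a matrix whose spectrum avoids `(-∞, 0]`,
given (for `0 < t < 1`) by the standard integral formula
`A^t = (sin (tπ)/π) ∫₀^∞ s^(t-1) A (A + s I)⁻¹ ds`. -/
noncomputable def apow {m : Type*} [Fintype m] [DecidableEq m]
    (A : Matrix m m ℂ) (t : ℝ) : Matrix m m ℂ :=
  if t = 0 then 1 else if t = 1 then A else
    Matrix.of fun i j => ∫ s in Set.Ioi (0 : ℝ),
      (((Real.sin (t * Real.pi) / Real.pi) * s ^ (t - 1)) •
        (A * (A + (s : ℂ) • (1 : Matrix m m ℂ))⁻¹)) i j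

/-- The weighted geometric mean `A ♯ₜ B = A^(1/2) (A^(-1/2) B A^(-1/2))^t A^(1/2)`
of (strictly accretive) matrices. -/
noncomputable def gmean {m : Type*} [Fintype m] [DecidableEq m]
    (A : Matrix m m ℂ) (t : ℝ) (B : Matrix m m ℂ) : Matrix m m ℂ :=
  apow A (1/2) * apow ((apow A (1/2))⁻¹ * B * (apow A (1/2))⁻¹) t * apow A (1/2)

/-- The absolute value `|X| = (Xᴴ X)^(1/2)` of a matrix. -/
noncomputable def absM {m : Type*} [Fintype m] [DecidableEq m]
    (X : Matrix m m ℂ) : Matrix m m ℂ :=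
  (Matrix.posSemidef_conjTranspose_mul_self X).1.eigenvectorUnitary.1 *
    diagonal ((↑) ∘ (√·) ∘ (Matrix.posSemidef_conjTranspose_mul_self X).1.eigenvalues) *
    (star (Matrix.posSemidef_conjTranspose_mul_self X).1.eigenvectorUnitary : Matrix m m ℂ)

/-- The `j`-th largest singular value of a complex matrix. -/
noncomputable def singVals {k : ℕ} (T : Matrix (Fin k) (Fin k) ℂ) (j : Fin k) : ℝ :=
  Real.sqrt (((Matrix.posSemidef_conjTranspose_mul_self T).1.eigenvalues ∘
    Tuple.sort (Matrix.posSemidef_conjTranspose_mul_self T).1.eigenvalues) j.rev)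

/-- The `j`-th largest eigenvalue of a Hermitian matrix (junk value `0` otherwise). -/
noncomputable def eigDesc {k : ℕ} (T : Matrix (Fin k) (Fin k) ℂ) (j : Fin k) : ℝ :=
  if h : T.IsHermitian then (h.eigenvalues ∘ Tuple.sort h.eigenvalues) j.rev else 0

/-- The numerical range of `A` lies in the sector
`S_α = {z : Re z ≥ 0, |Im z| ≤ tan α · Re z}`. -/
def InSector {k : ℕ} (α : ℝ) (A : Matrix (Fin k) (Fin k) ℂ) : Prop :=
  ∀ x : EuclideanSpace ℂ (Fin k), ‖x‖ = 1 →
    0 ≤ (star (x : Fin k → ℂ) ⬝ᵥ A.mulVec (x : Fin k → ℂ)).re ∧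
      |(star (x : Fin k → ℂ) ⬝ᵥ A.mulVec (x : Fin k → ℂ)).im| ≤
        Real.tan α * (star (x : Fin k → ℂ) ⬝ᵥ A.mulVec (x : Fin k → ℂ)).re

/-!
`Re M = [[Re A, X], [Xᴴ, Re B]]` is positive semidefinite, and comparing its quadratic form at
`(a, b)` and `(a, -b)` gives `Re⟨x, M x⟩ ≥ 4 Re⟨a, X b⟩` for `x = (a, b)`. With `s = sⱼ(X)` and
`b` ranging over the span of the top `j + 1` right singular vectors of `X`, the vectors
`x = (X b / s, b)` form a `(j + 1)`-dimensional space on which `Re⟨x, M x⟩ ≥ 2 s ‖x‖²`, so the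
Courant–Fischer principle gives `2 sⱼ(X) ≤ λⱼ(Re M)`. Courant–Fischer also gives the Fan–Hoffman
inequality `λⱼ(Re M) ≤ sⱼ(M)`: on the span of the bottom `2n - j` right singular vectors of `M`,
`Re⟨x, M x⟩ ≤ ‖x‖ ‖M x‖ ≤ sⱼ(M) ‖x‖²`.
-/

open Module Submodule

lemma EuclideanSpace.star_dotProduct_eq_inner {m : Type*} [Fintype m]
    (x y : EuclideanSpace ℂ m) : star ⇑x ⬝ᵥ ⇑y = inner ℂ x y := by
  rw [EuclideanSpace.inner_eq_star_dotProduct, dotProduct_comm]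

lemma EuclideanSpace.norm_sq_eq_re_star_dotProduct {m : Type*} [Fintype m]
    (x : EuclideanSpace ℂ m) : ‖x‖ ^ 2 = (star ⇑x ⬝ᵥ ⇑x).re := by
  rw [← inner_self_eq_norm_sq (𝕜 := ℂ), EuclideanSpace.star_dotProduct_eq_inner]
  rfl

lemma re_star_dotProduct_le_norm_mul_norm {m : Type*} [Fintype m] (x y : m → ℂ) :
    (star x ⬝ᵥ y).re ≤ ‖WithLp.toLp 2 x‖ * ‖WithLp.toLp 2 y‖ := by
  have := re_inner_le_norm (𝕜 := ℂ) (WithLp.toLp 2 x) (WithLp.toLp 2 y)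
  rwa [← EuclideanSpace.star_dotProduct_eq_inner] at this

lemma exists_re_star_dotProduct_mulVec_eq_sum_of_mem_span {m : Type*} [Fintype m]
    {H : Matrix m m ℂ} {ι : Type*} [Fintype ι]
    {w : ι → EuclideanSpace ℂ m} (hw : Orthonormal ℂ w) {μ : ι → ℝ}
    (hμ : ∀ k, H *ᵥ ⇑(w k) = μ k • ⇑(w k)) {x : EuclideanSpace ℂ m}
    (hx : x ∈ span ℂ (Set.range w)) :
    ∃ r : ι → ℝ, (∀ k, 0 ≤ r k) ∧
      (star ⇑x ⬝ᵥ H *ᵥ ⇑x).re = ∑ k, μ k * r k ∧ ‖x‖ ^ 2 = ∑ k, r k := by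
  obtain ⟨c, rfl⟩ := mem_span_range_iff_exists_fun ℂ |>.mp hx
  refine ⟨fun k => Complex.normSq (c k), fun k => Complex.normSq_nonneg _, ?_, ?_⟩
  · have hHx : H *ᵥ ⇑(∑ k, c k • w k) = ⇑(∑ k, (c k * μ k) • w k) := by
      simp [Matrix.mulVec_sum, Matrix.mulVec_smul, hμ, mul_smul, Complex.coe_smul]
    rw [hHx, EuclideanSpace.star_dotProduct_eq_inner, hw.inner_sum, Complex.re_sum]
    congr! 1 with k
    rw [← mul_assoc, ← Complex.normSq_eq_conj_mul_self, ← Complex.ofReal_mul, Complex.ofReal_re,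
      mul_comm]
  · rw [← inner_self_eq_norm_sq (𝕜 := ℂ), hw.inner_sum, RCLike.re_to_complex, Complex.re_sum]
    congr! 1 with k
    rw [← Complex.normSq_eq_conj_mul_self, Complex.ofReal_re]

lemma Submodule.exists_mem_inf_ne_zero_of_finrank_lt {K V : Type*} [DivisionRing K]
    [AddCommGroup V] [Module K V] [FiniteDimensional K V] {S T : Submodule K V}
    (h : finrank K V < finrank K S + finrank K T) : ∃ x ∈ S ⊓ T, x ≠ 0 := by
  have hST := Submodule.finrank_sup_add_finrank_inf_eq S T
  have hsup := (S ⊔ T).finrank_le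
  exact Submodule.exists_mem_ne_zero_of_ne_bot fun hbot => by
    rw [hbot, finrank_bot] at hST; omega

namespace Matrix.IsHermitian

variable {N : ℕ} {H : Matrix (Fin N) (Fin N) ℂ}

lemma eigDesc_eq (hH : H.IsHermitian) (i : Fin N) :
    eigDesc H i = hH.eigenvalues (Tuple.sort hH.eigenvalues i.rev) :=
  dif_pos hH

lemma exists_finrank_eq_eigDesc_mul_le (hH : H.IsHermitian) (i : Fin N) :
    ∃ S : Submodule ℂ (EuclideanSpace ℂ (Fin N)), finrank ℂ S = i + 1 ∧
      ∀ x ∈ S, eigDesc H i * ‖x‖ ^ 2 ≤ (star ⇑x ⬝ᵥ H *ᵥ ⇑x).re := by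
  set σ := Tuple.sort hH.eigenvalues
  set w : Finset.Ici i.rev → EuclideanSpace ℂ (Fin N) := fun k => hH.eigenvectorBasis (σ k)
  have hw : Orthonormal ℂ w :=
    hH.eigenvectorBasis.orthonormal.comp _ (σ.injective.comp Subtype.val_injective)
  refine ⟨span ℂ (Set.range w), ?_, fun x hx => ?_⟩
  · rw [finrank_span_eq_card hw.linearIndependent, Fintype.card_coe, Fin.card_Ici, Fin.val_rev]
    omega
  · obtain ⟨r, hr, hform, hnorm⟩ := exists_re_star_dotProduct_mulVec_eq_sum_of_mem_span hw
      (fun k => hH.mulVec_eigenvectorBasis _) hx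
    rw [hform, hnorm, Finset.mul_sum, eigDesc_eq hH]
    exact Finset.sum_le_sum fun k _ => mul_le_mul_of_nonneg_right
      (Tuple.monotone_sort hH.eigenvalues (Finset.mem_Ici.mp k.2)) (hr k)

lemma exists_finrank_eq_le_eigDesc_mul (hH : H.IsHermitian) (i : Fin N) :
    ∃ S : Submodule ℂ (EuclideanSpace ℂ (Fin N)), finrank ℂ S = N - i ∧
      ∀ x ∈ S, (star ⇑x ⬝ᵥ H *ᵥ ⇑x).re ≤ eigDesc H i * ‖x‖ ^ 2 := by
  set σ := Tuple.sort hH.eigenvalues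
  set w : Finset.Iic i.rev → EuclideanSpace ℂ (Fin N) := fun k => hH.eigenvectorBasis (σ k)
  have hw : Orthonormal ℂ w :=
    hH.eigenvectorBasis.orthonormal.comp _ (σ.injective.comp Subtype.val_injective)
  refine ⟨span ℂ (Set.range w), ?_, fun x hx => ?_⟩
  · rw [finrank_span_eq_card hw.linearIndependent, Fintype.card_coe, Fin.card_Iic, Fin.val_rev]
    omega
  · obtain ⟨r, hr, hform, hnorm⟩ := exists_re_star_dotProduct_mulVec_eq_sum_of_mem_span hw
      (fun k => hH.mulVec_eigenvectorBasis _) hx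
    rw [hform, hnorm, Finset.mul_sum, eigDesc_eq hH]
    exact Finset.sum_le_sum fun k _ => mul_le_mul_of_nonneg_right
      (Tuple.monotone_sort hH.eigenvalues (Finset.mem_Iic.mp k.2)) (hr k)

lemma le_eigDesc_of_forall_mem (hH : H.IsHermitian) {i : Fin N}
    {S : Submodule ℂ (EuclideanSpace ℂ (Fin N))} (hS : i + 1 ≤ finrank ℂ S) {c : ℝ}
    (hc : ∀ x ∈ S, c * ‖x‖ ^ 2 ≤ (star ⇑x ⬝ᵥ H *ᵥ ⇑x).re) : c ≤ eigDesc H i := by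
  obtain ⟨T, hT, hTle⟩ := hH.exists_finrank_eq_le_eigDesc_mul i
  obtain ⟨x, ⟨hxS, hxT⟩, hx0⟩ := exists_mem_inf_ne_zero_of_finrank_lt (S := S) (T := T) (by
    rw [finrank_euclideanSpace_fin, hT]; omega)
  exact le_of_mul_le_mul_right ((hc x hxS).trans (hTle x hxT)) (by positivity)

lemma eigDesc_le_of_forall_mem (hH : H.IsHermitian) {i : Fin N}
    {S : Submodule ℂ (EuclideanSpace ℂ (Fin N))} (hS : N - i ≤ finrank ℂ S) {c : ℝ}
    (hc : ∀ x ∈ S, (star ⇑x ⬝ᵥ H *ᵥ ⇑x).re ≤ c * ‖x‖ ^ 2) : eigDesc H i ≤ c := by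
  obtain ⟨T, hT, hTle⟩ := hH.exists_finrank_eq_eigDesc_mul_le i
  obtain ⟨x, ⟨hxS, hxT⟩, hx0⟩ := exists_mem_inf_ne_zero_of_finrank_lt (S := S) (T := T) (by
    rw [finrank_euclideanSpace_fin, hT]; omega)
  exact le_of_mul_le_mul_right ((hTle x hxT).trans (hc x hxS)) (by positivity)

end Matrix.IsHermitian

lemma mre_isHermitian {m : Type*} (T : Matrix m m ℂ) : (mre T).IsHermitian := by
  simp only [mre, IsHermitian, conjTranspose_smul, conjTranspose_add, conjTranspose_conjTranspose,
    add_comm T]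
  norm_num

lemma re_star_dotProduct_mre_mulVec {m : Type*} [Fintype m] (T : Matrix m m ℂ) (x : m → ℂ) :
    (star x ⬝ᵥ mre T *ᵥ x).re = (star x ⬝ᵥ T *ᵥ x).re := by
  have hstar : star x ⬝ᵥ Tᴴ *ᵥ x = star (star x ⬝ᵥ T *ᵥ x) := by
    rw [star_dotProduct, star_mulVec, conjTranspose_conjTranspose, ← dotProduct_mulVec]
  simp only [mre, smul_mulVec, add_mulVec, dotProduct_smul, dotProduct_add, hstar, smul_eq_mul,
    Complex.mul_re, Complex.add_re, Complex.star_def, Complex.conj_re]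
  norm_num
  ring

lemma star_dotProduct_reindex_mulVec {m m' : Type*} [Fintype m] [Fintype m'] (e : m ≃ m')
    (F : Matrix m m ℂ) (y : m → ℂ) :
    star (y ∘ e.symm) ⬝ᵥ reindex e e F *ᵥ (y ∘ e.symm) = star y ⬝ᵥ F *ᵥ y := by
  rw [reindex_apply, submatrix_mulVec_equiv, Equiv.symm_symm, Function.comp_assoc,
    e.symm_comp_self, Function.comp_id]
  exact comp_equiv_dotProduct_comp_equiv (star y) (F *ᵥ y) e.symm

lemma re_star_dotProduct_conjTranspose_mul_self_mulVec {m n : Type*} [Fintype m] [Fintype n]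
    (T : Matrix m n ℂ) (x : n → ℂ) :
    (star x ⬝ᵥ (Tᴴ * T) *ᵥ x).re = ‖WithLp.toLp 2 (T *ᵥ x)‖ ^ 2 := by
  rw [EuclideanSpace.norm_sq_eq_re_star_dotProduct, ← mulVec_mulVec, dotProduct_mulVec, star_mulVec]

namespace Accretive

variable {m : Type*} [Fintype m]

lemma re_star_dotProduct_mulVec_nonneg {M : Matrix m m ℂ} (hM : Accretive M) (x : m → ℂ) :
    0 ≤ (star x ⬝ᵥ M *ᵥ x).re := by
  rw [← re_star_dotProduct_mre_mulVec]
  exact hM.re_dotProduct_nonneg x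

lemma four_mul_re_star_dotProduct_le {n : Type*} [Fintype n] {A : Matrix m m ℂ}
    {B : Matrix n n ℂ} {X : Matrix m n ℂ} (hM : Accretive (fromBlocks A X Xᴴ B))
    (a : m → ℂ) (b : n → ℂ) :
    4 * (star a ⬝ᵥ X *ᵥ b).re ≤
      (star (Sum.elim a b) ⬝ᵥ fromBlocks A X Xᴴ B *ᵥ Sum.elim a b).re := by
  have hstar : star b ⬝ᵥ Xᴴ *ᵥ a = star (star a ⬝ᵥ X *ᵥ b) := by
    rw [star_dotProduct, star_mulVec, conjTranspose_conjTranspose, ← dotProduct_mulVec]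
  have hflip := hM.re_star_dotProduct_mulVec_nonneg (Sum.elim a (-b))
  simp only [fromBlocks_mulVec, Sum.elim_comp_inl, Sum.elim_comp_inr, Function.star_sumElim,
    sumElim_dotProduct_sumElim, mulVec_neg, star_neg, neg_dotProduct, dotProduct_neg,
    dotProduct_add, hstar, Complex.add_re, Complex.neg_re, Complex.star_def,
    Complex.conj_re] at hflip ⊢
  linarith

end Accretive

section SingularValues

variable {N : ℕ}

lemma singVals_eq_sqrt_eigDesc (T : Matrix (Fin N) (Fin N) ℂ) (i : Fin N) :
    singVals T i = √(eigDesc (Tᴴ * T) i) := by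
  rw [singVals, (isHermitian_conjTranspose_mul_self T).eigDesc_eq]
  rfl

lemma eigDesc_conjTranspose_mul_self_nonneg (T : Matrix (Fin N) (Fin N) ℂ) (i : Fin N) :
    0 ≤ eigDesc (Tᴴ * T) i := by
  rw [(isHermitian_conjTranspose_mul_self T).eigDesc_eq]
  exact (posSemidef_conjTranspose_mul_self T).eigenvalues_nonneg _

lemma singVals_nonneg (T : Matrix (Fin N) (Fin N) ℂ) (i : Fin N) : 0 ≤ singVals T i :=
  Real.sqrt_nonneg _

lemma sq_singVals (T : Matrix (Fin N) (Fin N) ℂ) (i : Fin N) :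
    singVals T i ^ 2 = eigDesc (Tᴴ * T) i := by
  rw [singVals_eq_sqrt_eigDesc, Real.sq_sqrt (eigDesc_conjTranspose_mul_self_nonneg T i)]

lemma eigDesc_mre_le_singVals (T : Matrix (Fin N) (Fin N) ℂ) (i : Fin N) :
    eigDesc (mre T) i ≤ singVals T i := by
  obtain ⟨S, hS, hSle⟩ := (isHermitian_conjTranspose_mul_self T).exists_finrank_eq_le_eigDesc_mul i
  refine (mre_isHermitian T).eigDesc_le_of_forall_mem hS.ge fun x hx => ?_
  have hTx : ‖WithLp.toLp 2 (T *ᵥ ⇑x)‖ ≤ singVals T i * ‖x‖ := by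
    apply le_of_pow_le_pow_left₀ two_ne_zero (by have := singVals_nonneg T i; positivity)
    rw [mul_pow, sq_singVals, ← re_star_dotProduct_conjTranspose_mul_self_mulVec]
    exact hSle x hx
  calc (star ⇑x ⬝ᵥ mre T *ᵥ ⇑x).re = (star ⇑x ⬝ᵥ T *ᵥ ⇑x).re := re_star_dotProduct_mre_mulVec T x
    _ ≤ ‖x‖ * ‖WithLp.toLp 2 (T *ᵥ ⇑x)‖ := re_star_dotProduct_le_norm_mul_norm _ _
    _ ≤ ‖x‖ * (singVals T i * ‖x‖) := by gcongr
    _ = singVals T i * ‖x‖ ^ 2 := by ring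

end SingularValues

section GraphLin

variable {m n : ℕ}

noncomputable def graphLin (c : ℝ) (X : Matrix (Fin m) (Fin n) ℂ) :
    EuclideanSpace ℂ (Fin n) →ₗ[ℂ] EuclideanSpace ℂ (Fin (m + n)) :=
  toLpLin 2 2 ((fromRows (c • X) 1).reindex finSumFinEquiv (Equiv.refl _))

lemma ofLp_graphLin (c : ℝ) (X : Matrix (Fin m) (Fin n) ℂ) (b : EuclideanSpace ℂ (Fin n)) :
    ⇑(graphLin c X b) = Sum.elim (c • X *ᵥ ⇑b) ⇑b ∘ finSumFinEquiv.symm := by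
  rw [graphLin, toLpLin_apply, reindex_apply, submatrix_mulVec_equiv, fromRows_mulVec]
  simp [smul_mulVec]

lemma graphLin_injective (c : ℝ) (X : Matrix (Fin m) (Fin n) ℂ) :
    Function.Injective (graphLin c X) := by
  rw [← LinearMap.ker_eq_bot, LinearMap.ker_eq_bot']
  intro b hb
  ext i
  have := congrFun (congrArg WithLp.ofLp hb) (finSumFinEquiv (Sum.inr i))
  rwa [ofLp_graphLin, Function.comp_apply, Equiv.symm_apply_apply, Sum.elim_inr] at this

lemma norm_sq_graphLin (c : ℝ) (X : Matrix (Fin m) (Fin n) ℂ) (b : EuclideanSpace ℂ (Fin n)) :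
    ‖graphLin c X b‖ ^ 2 = c ^ 2 * ‖WithLp.toLp 2 (X *ᵥ ⇑b)‖ ^ 2 + ‖b‖ ^ 2 := by
  simp only [EuclideanSpace.norm_sq_eq_re_star_dotProduct, ofLp_graphLin]
  rw [show ∀ y : Fin m ⊕ Fin n → ℂ, star (y ∘ finSumFinEquiv.symm) = star y ∘ finSumFinEquiv.symm
    from fun _ => rfl, comp_equiv_dotProduct_comp_equiv, Function.star_sumElim,
    sumElim_dotProduct_sumElim]
  simp only [star_smul, star_trivial, smul_dotProduct, dotProduct_smul, Complex.add_re,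
    Complex.smul_re]
  ring

lemma Accretive.four_mul_le_re_star_dotProduct_graphLin {A : Matrix (Fin m) (Fin m) ℂ}
    {B : Matrix (Fin n) (Fin n) ℂ} {X : Matrix (Fin m) (Fin n) ℂ}
    (hM : Accretive (fromBlocks A X Xᴴ B)) (c : ℝ) (b : EuclideanSpace ℂ (Fin n)) :
    4 * c * ‖WithLp.toLp 2 (X *ᵥ ⇑b)‖ ^ 2 ≤ (star ⇑(graphLin c X b) ⬝ᵥ
      reindex finSumFinEquiv finSumFinEquiv (fromBlocks A X Xᴴ B) *ᵥ ⇑(graphLin c X b)).re := by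
  rw [ofLp_graphLin, star_dotProduct_reindex_mulVec]
  refine le_trans (le_of_eq ?_) (hM.four_mul_re_star_dotProduct_le _ _)
  rw [EuclideanSpace.norm_sq_eq_re_star_dotProduct]
  simp only [star_smul, star_trivial, smul_dotProduct, Complex.smul_re]
  ring

end GraphLin

lemma two_mul_singVals_le_eigDesc_mre {n : ℕ} {A B X : Matrix (Fin n) (Fin n) ℂ}
    (hM : Accretive (fromBlocks A X Xᴴ B)) (j : Fin n) :
    2 * singVals X j ≤ eigDesc (mre (reindex finSumFinEquiv finSumFinEquiv
      (fromBlocks A X Xᴴ B))) (Fin.castAdd n j) := by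
  set s := singVals X j
  have hs : 0 ≤ s := singVals_nonneg X j
  obtain ⟨V, hV, hVle⟩ := (isHermitian_conjTranspose_mul_self X).exists_finrank_eq_eigDesc_mul_le j
  refine (mre_isHermitian _).le_eigDesc_of_forall_mem (S := V.map (graphLin s⁻¹ X)) ?_ ?_
  · rw [(equivMapOfInjective _ (graphLin_injective s⁻¹ X) V).symm.finrank_eq, hV,
      Fin.val_castAdd]
  rintro _ ⟨b, hb, rfl⟩
  have ht : s ^ 2 * ‖b‖ ^ 2 ≤ ‖WithLp.toLp 2 (X *ᵥ ⇑b)‖ ^ 2 := by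
    rw [sq_singVals, ← re_star_dotProduct_conjTranspose_mul_self_mulVec]
    exact hVle b hb
  set t := ‖WithLp.toLp 2 (X *ᵥ ⇑b)‖ ^ 2
  rw [re_star_dotProduct_mre_mulVec, norm_sq_graphLin]
  refine le_trans ?_ (hM.four_mul_le_re_star_dotProduct_graphLin s⁻¹ b)
  -- also valid for `s = 0`, where `s⁻¹ = 0`
  calc 2 * s * ((s⁻¹) ^ 2 * t + ‖b‖ ^ 2) = 2 * s⁻¹ * t + 2 * s⁻¹ * (s ^ 2 * ‖b‖ ^ 2) := by
        rcases hs.eq_or_lt with h | h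
        · simp [← h]
        · field_simp
    _ ≤ 2 * s⁻¹ * t + 2 * s⁻¹ * t := by gcongr
    _ = 4 * s⁻¹ * t := by ring

/-- If the block matrix `M = [[A, X], [Xᴴ, B]]` is accretive, then
`2 sⱼ(X) ≤ sⱼ(M)` for `j = 1, …, n`. -/
theorem stmt6 {n : ℕ} (A B X : Matrix (Fin n) (Fin n) ℂ)
    (hM : Accretive (Matrix.fromBlocks A X Xᴴ B)) (j : Fin n) :
    2 * singVals X j ≤
      singVals (Matrix.reindex finSumFinEquiv finSumFinEquiv (Matrix.fromBlocks A X Xᴴ B))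
        (Fin.castAdd n j) :=
  (two_mul_singVals_le_eigDesc_mre hM j).trans (eigDesc_mre_le_singVals _ _)
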